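/- (Closedness of the Clarke gradient.) Let f : ℝ^m → ℝ be Lipschitz of rank K on a neighborhood of x, and let (x_i) and (ζ_i) be sequences in ℝ^m with x_i → x, ζ_i ∈ ∂f(x_i) for every i, and ζ_i → ζ. Then ζ ∈ ∂f(x). -/

import Mathlib

open RealInnerProductSpace Filter Topology

/-- The Clarke generalized directional derivative
`f°(p; v) = limsup_{q → p, t ↓ 0} (f(q + t v) − f(q)) / t`. -/
noncomputable def cDD {F : Type*} [NormedAddCommGroup F] [NormedSpace ℝ F]
    (f : F → ℝ) (p v : F) : ℝ :=
  Filter.limsup (fun qt : F × ℝ => (f (qt.1 + qt.2 • v) - f qt.1) / qt.2)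
    ((nhds p) ×ˢ (nhdsWithin 0 (Set.Ioi 0)))

/-- The Clarke generalized gradient `∂f(p) = {ζ : ⟨ζ, v⟩ ≤ f°(p; v) for all v}`. -/
noncomputable def clarkeGrad {F : Type*} [NormedAddCommGroup F] [InnerProductSpace ℝ F]
    (f : F → ℝ) (p : F) : Set F :=
  { ζ | ∀ v, ⟪ζ, v⟫ ≤ cDD f p v }

/-!
A Lipschitz bound of rank `K` near `x` bounds every difference quotient `(f (q + t v) - f q) / t`
by `K ‖v‖` for `(q, t)` near `(x, 0⁺)`. So the limsup defining `f°(·; v)` is finite, and the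
whole window on which the quotients at `x` stay below some `c` is also a window for every nearby
point: `f°(·; v)` is upper semicontinuous at `x`. Passing to the limit in
`⟪ζ_i, v⟫ ≤ f°(x_i; v)` then gives `⟪ζ, v⟫ ≤ f°(x; v)`.
-/

theorem UpperSemicontinuousAt.le_of_tendsto {X β ι : Type*} [TopologicalSpace X] [LinearOrder β]
    [DenselyOrdered β] [TopologicalSpace β] [OrderClosedTopology β] {φ : X → β} {x : X}
    (hφ : UpperSemicontinuousAt φ x) {l : Filter ι} [l.NeBot] {xs : ι → X} {a : ι → β} {α : β}
    (hxs : Tendsto xs l (𝓝 x)) (ha : Tendsto a l (𝓝 α)) (hle : ∀ᶠ i in l, a i ≤ φ (xs i)) :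
    α ≤ φ x := by
  refine le_of_forall_gt_imp_ge_of_dense fun c hc => _root_.le_of_tendsto ha ?_
  filter_upwards [hxs.eventually (hφ c hc), hle] with i hlt hle
  exact hle.trans hlt.le

section ClarkeDirectionalDerivative

variable {F : Type*} [NormedAddCommGroup F] [NormedSpace ℝ F]

noncomputable def diffQuot (f : F → ℝ) (v : F) (qt : F × ℝ) : ℝ :=
  (f (qt.1 + qt.2 • v) - f qt.1) / qt.2

variable {f : F → ℝ} {K : NNReal} {s : Set F} {p : F}

theorem eventually_abs_diffQuot_le (hs : s ∈ 𝓝 p) (hf : LipschitzOnWith K f s) (v : F) :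
    ∀ᶠ qt in 𝓝 p ×ˢ 𝓝[>] (0 : ℝ), |diffQuot f v qt| ≤ K * ‖v‖ := by
  have hshift : Tendsto (fun qt : F × ℝ => qt.1 + qt.2 • v) (𝓝 p ×ˢ 𝓝[>] (0 : ℝ)) (𝓝 p) := by
    simpa using (tendsto_fst (g := 𝓝[>] (0 : ℝ))).add
      ((tendsto_snd.mono_right nhdsWithin_le_nhds).smul_const v)
  filter_upwards [tendsto_fst.eventually hs, hshift hs,
    tendsto_snd.eventually self_mem_nhdsWithin] with ⟨q, t⟩ hq hqt (ht : 0 < t)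
  rw [diffQuot, abs_div, abs_of_pos ht, div_le_iff₀ ht]
  calc |f (q + t • v) - f q| ≤ K * ‖q + t • v - q‖ := by
        simpa [Real.dist_eq, dist_eq_norm] using hf.dist_le_mul _ hqt _ hq
    _ = K * ‖v‖ * t := by rw [add_sub_cancel_left, norm_smul, Real.norm_of_nonneg ht.le]; ring

theorem isBoundedUnder_le_diffQuot (hs : s ∈ 𝓝 p) (hf : LipschitzOnWith K f s) (v : F) :
    IsBoundedUnder (· ≤ ·) (𝓝 p ×ˢ 𝓝[>] (0 : ℝ)) (diffQuot f v) :=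
  isBoundedUnder_of_eventually_le <|
    (eventually_abs_diffQuot_le hs hf v).mono fun _ h => (abs_le.1 h).2

theorem isCoboundedUnder_le_diffQuot (hs : s ∈ 𝓝 p) (hf : LipschitzOnWith K f s) (v : F) :
    IsCoboundedUnder (· ≤ ·) (𝓝 p ×ˢ 𝓝[>] (0 : ℝ)) (diffQuot f v) :=
  IsBoundedUnder.isCoboundedUnder_le <| isBoundedUnder_of_eventually_ge <|
    (eventually_abs_diffQuot_le hs hf v).mono fun _ h => (abs_le.1 h).1

theorem upperSemicontinuousAt_cDD (hs : s ∈ 𝓝 p) (hf : LipschitzOnWith K f s) (v : F) :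
    UpperSemicontinuousAt (fun y => cDD f y v) p := by
  intro c hc
  obtain ⟨c', hc', hc'c⟩ := exists_between hc
  obtain ⟨U, hU, T, hT, hUT⟩ :=
    mem_prod_iff.1 (eventually_lt_of_limsup_lt hc' (isBoundedUnder_le_diffQuot hs hf v))
  filter_upwards [eventually_eventually_nhds.2 hs, eventually_eventually_nhds.2 hU]
    with y (hsy : s ∈ 𝓝 y) (hUy : U ∈ 𝓝 y)
  refine (limsup_le_of_le (isCoboundedUnder_le_diffQuot hsy hf v) ?_).trans_lt hc'c
  filter_upwards [prod_mem_prod hUy hT] with qt hqt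
  exact (hUT hqt).le

end ClarkeDirectionalDerivative

theorem mem_clarkeGrad_of_tendsto {F ι : Type*} [NormedAddCommGroup F] [InnerProductSpace ℝ F]
    {f : F → ℝ} {K : NNReal} {s : Set F} {x : F} (hs : s ∈ 𝓝 x) (hf : LipschitzOnWith K f s)
    {l : Filter ι} [l.NeBot] {xs ζs : ι → F} {ζ : F} (hxs : Tendsto xs l (𝓝 x))
    (hζmem : ∀ᶠ i in l, ζs i ∈ clarkeGrad f (xs i)) (hζs : Tendsto ζs l (𝓝 ζ)) :
    ζ ∈ clarkeGrad f x := fun v =>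
  (upperSemicontinuousAt_cDD hs hf v).le_of_tendsto hxs (hζs.inner tendsto_const_nhds)
    (hζmem.mono fun _ hi => hi v)

/-- (Closedness of the Clarke gradient.) If `f` is Lipschitz of rank `K`
on a neighborhood of `x`, `x_i → x`, `ζ_i ∈ ∂f(x_i)` and `ζ_i → ζ`, then `ζ ∈ ∂f(x)`. -/
theorem clarke_gradient_closed {m : ℕ} (f : EuclideanSpace ℝ (Fin m) → ℝ)
    (x : EuclideanSpace ℝ (Fin m)) (K : NNReal)
    (hf : ∃ ε > (0 : ℝ), LipschitzOnWith K f (Metric.ball x ε))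
    (xs ζs : ℕ → EuclideanSpace ℝ (Fin m)) (ζ : EuclideanSpace ℝ (Fin m))
    (hxs : Filter.Tendsto xs Filter.atTop (nhds x))
    (hζmem : ∀ i, ζs i ∈ clarkeGrad f (xs i))
    (hζs : Filter.Tendsto ζs Filter.atTop (nhds ζ)) :
    ζ ∈ clarkeGrad f x := by
  obtain ⟨ε, hε, hlip⟩ := hf
  exact mem_clarkeGrad_of_tendsto (Metric.ball_mem_nhds x hε) hlip hxs
    (Eventually.of_forall hζmem) hζs
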